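/- arXiv:2511.02625 — 2 statements merged into one kernel-verified Lean document; each statement's English description precedes it below -/
import Mathlib

section
/- The function ξ(t) = C·(Γ((t-k)/2)/Γ((t+d+k+1)/2))² (for fixed positive constant C and integers d, k) satisfies, for every β ∈ ℕ, the two-sided asymptotic estimate (-1)^β ξ^{(β)}(t) ≍ t^{-(d+2k+1)-β} as t → ∞; in particular ξ(t) ≍ t^{-(d+2k+1)} and ξ is eventually completely monotone in the sense that its derivatives alternate in sign. -/
/-!
Put `a = (t - k) / 2` and `σ = (d + 2k + 1) / 2`, so that `ξ(t) = C (Γ(a) / Γ(a + σ))²`.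
Euler's Beta integral with `x = e^{-u}` gives
`Γ(a) / Γ(a + σ) = Γ(σ)⁻¹ ∫₀^∞ e^{-au} (1 - e^{-u})^{σ-1} du`: up to a constant, the ratio is the
moment generating function of a measure on `(0, ∞)`, so it is smooth and its `n`-th derivative
is `(-1)ⁿ Γ(σ)⁻¹ Lₙ(a)`, where `Lₙ(a) = ∫₀^∞ uⁿ e^{-au} (1 - e^{-u})^{σ-1} du > 0`.
By Leibniz' rule, `(-1)^β` times the `β`-th derivative of the square is a positive combination
of the products `Lᵢ(a) L_{β-i}(a)`. Finally `u e^{-u/2} ≤ 1 - e^{-u} ≤ u` squeezes the kernel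
between `u^{σ-1}` times two exponentials, and comparison with Euler's Gamma integral gives
`Lₙ(a) ≍ Γ(n + σ) a^{-(n+σ)}` for `a ≥ 1/2`, hence the order `a^{-(2σ+β)}` of the products.
-/

open Real MeasureTheory ProbabilityTheory Set Filter Topology

noncomputable section

namespace GammaRatio

def betaKernel (σ u : ℝ) : ℝ := (1 - exp (-u)) ^ (σ - 1)

variable {σ u : ℝ}

lemma one_sub_exp_neg_pos (hu : 0 < u) : 0 < 1 - exp (-u) :=
  sub_pos.mpr (exp_lt_one_iff.mpr (neg_lt_zero.mpr hu))

lemma mul_exp_neg_half_le_one_sub_exp_neg (hu : 0 ≤ u) : u * exp (-(u / 2)) ≤ 1 - exp (-u) := by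
  have h : u ≤ exp (u / 2) - exp (-(u / 2)) := by
    have := self_le_sinh_iff.mpr (by positivity : 0 ≤ u / 2)
    rw [sinh_eq] at this
    linarith
  have h2 : (exp (u / 2) - exp (-(u / 2))) * exp (-(u / 2)) = 1 - exp (-u) := by
    rw [sub_mul, ← exp_add, ← exp_add]; ring_nf; rw [exp_zero]
  nlinarith [exp_pos (-(u / 2))]

lemma log_sub_half_le_log_one_sub_exp_neg (hu : 0 < u) :
    log u - u / 2 ≤ log (1 - exp (-u)) := by
  have h := log_le_log (by positivity) (mul_exp_neg_half_le_one_sub_exp_neg hu.le)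
  rwa [log_mul hu.ne' (exp_pos _).ne', log_exp, ← sub_eq_add_neg] at h

lemma log_one_sub_exp_neg_le_log (hu : 0 < u) : log (1 - exp (-u)) ≤ log u :=
  log_le_log (one_sub_exp_neg_pos hu) (by linarith [one_sub_le_exp_neg u])

lemma rpow_mul_exp_le_betaKernel (hu : 0 < u) :
    u ^ (σ - 1) * exp (-(max (σ - 1) 0 / 2 * u)) ≤ betaKernel σ u := by
  rw [betaKernel, rpow_def_of_pos hu, rpow_def_of_pos (one_sub_exp_neg_pos hu), ← exp_add,
    exp_le_exp]
  have h1 := log_sub_half_le_log_one_sub_exp_neg hu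
  have h2 := log_one_sub_exp_neg_le_log hu
  rcases le_total σ 1 with h | h
  · rw [max_eq_right (by linarith)]; nlinarith
  · rw [max_eq_left (by linarith)]; nlinarith

lemma betaKernel_le_rpow_mul_exp (hu : 0 < u) :
    betaKernel σ u ≤ u ^ (σ - 1) * exp (max (1 - σ) 0 / 2 * u) := by
  rw [betaKernel, rpow_def_of_pos hu, rpow_def_of_pos (one_sub_exp_neg_pos hu), ← exp_add,
    exp_le_exp]
  have h1 := log_sub_half_le_log_one_sub_exp_neg hu
  have h2 := log_one_sub_exp_neg_le_log hu
  rcases le_total σ 1 with h | h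
  · rw [max_eq_left (by linarith)]; nlinarith
  · rw [max_eq_right (by linarith)]; nlinarith

lemma integrableOn_rpow_mul_exp_neg_mul {r b : ℝ} (hr : -1 < r) (hb : 0 < b) :
    IntegrableOn (fun u : ℝ => u ^ r * exp (-(b * u))) (Ioi 0) := by
  simpa [neg_mul] using integrableOn_rpow_mul_exp_neg_mul_rpow (p := 1) hr one_pos hb

lemma integral_rpow_mul_exp_neg_mul {s b : ℝ} (hs : 0 < s) (hb : 0 < b) :
    ∫ u in Ioi 0, u ^ (s - 1) * exp (-(b * u)) = Gamma s * b ^ (-s) := by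
  rw [integral_rpow_mul_exp_neg_mul_Ioi hs hb, one_div, inv_rpow hb.le, rpow_neg hb.le, mul_comm]

lemma pow_mul_exp_mul_betaKernel_le (hu : 0 < u) (n : ℕ) (a : ℝ) :
    u ^ n * exp (-(a * u)) * betaKernel σ u ≤
      u ^ ((n : ℝ) + σ - 1) * exp (-((a - max (1 - σ) 0 / 2) * u)) := by
  calc u ^ n * exp (-(a * u)) * betaKernel σ u
      ≤ u ^ n * exp (-(a * u)) * (u ^ (σ - 1) * exp (max (1 - σ) 0 / 2 * u)) := by
        gcongr; exact betaKernel_le_rpow_mul_exp hu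
    _ = u ^ ((n : ℝ) + σ - 1) * exp (-((a - max (1 - σ) 0 / 2) * u)) := by
        rw [add_sub_assoc, rpow_add hu, rpow_natCast,
          show -((a - max (1 - σ) 0 / 2) * u) = -(a * u) + max (1 - σ) 0 / 2 * u by ring, exp_add]
        ring

lemma rpow_mul_exp_le_pow_mul_exp_mul_betaKernel (hu : 0 < u) (n : ℕ) (a : ℝ) :
    u ^ ((n : ℝ) + σ - 1) * exp (-((a + max (σ - 1) 0 / 2) * u)) ≤
      u ^ n * exp (-(a * u)) * betaKernel σ u := by
  calc u ^ ((n : ℝ) + σ - 1) * exp (-((a + max (σ - 1) 0 / 2) * u))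
      = u ^ n * exp (-(a * u)) * (u ^ (σ - 1) * exp (-(max (σ - 1) 0 / 2 * u))) := by
        rw [add_sub_assoc, rpow_add hu, rpow_natCast,
          show -((a + max (σ - 1) 0 / 2) * u) = -(a * u) + -(max (σ - 1) 0 / 2 * u) by ring,
          exp_add]
        ring
    _ ≤ u ^ n * exp (-(a * u)) * betaKernel σ u := by
        gcongr; exact rpow_mul_exp_le_betaKernel hu

lemma betaKernel_nonneg (hu : 0 ≤ u) : 0 ≤ betaKernel σ u :=
  rpow_nonneg (by linarith [exp_le_one_iff.mpr (neg_nonpos.mpr hu)]) _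

lemma measurable_betaKernel : Measurable (betaKernel σ) := by
  unfold betaKernel; fun_prop

def laplaceMoment (σ : ℝ) (n : ℕ) (a : ℝ) : ℝ :=
  ∫ u in Ioi 0, u ^ n * exp (-(a * u)) * betaKernel σ u

lemma integrableOn_laplaceMoment (hσ : 0 < σ) (n : ℕ) {a : ℝ} (ha : max (1 - σ) 0 / 2 < a) :
    IntegrableOn (fun u => u ^ n * exp (-(a * u)) * betaKernel σ u) (Ioi 0) := by
  refine Integrable.mono' (integrableOn_rpow_mul_exp_neg_mul (r := (n : ℝ) + σ - 1)
    (by linarith [n.cast_nonneg (α := ℝ)]) (sub_pos.mpr ha))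
    ((by fun_prop : Measurable fun u : ℝ => u ^ n * exp (-(a * u))).mul
      measurable_betaKernel).aestronglyMeasurable ?_
  filter_upwards [ae_restrict_mem measurableSet_Ioi] with u hu
  have hu : 0 < u := hu
  rw [norm_of_nonneg (by have := betaKernel_nonneg hu.le (σ := σ); positivity)]
  exact pow_mul_exp_mul_betaKernel_le hu n a

lemma max_one_sub_div_two_lt (hσ : 0 < σ) {a : ℝ} (ha : 1 / 2 ≤ a) : max (1 - σ) 0 / 2 < a := by
  rcases le_total σ 1 with h | h
  · rw [max_eq_left (by linarith)]; linarith
  · rw [max_eq_right (by linarith)]; linarith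

lemma le_laplaceMoment (hσ : 0 < σ) {a : ℝ} (ha : 1 / 2 ≤ a) (n : ℕ) :
    Gamma (n + σ) * (max 1 σ * a) ^ (-((n : ℝ) + σ)) ≤ laplaceMoment σ n a := by
  have hs : 0 < (n : ℝ) + σ := by positivity
  have hMa : 0 < max 1 σ * a := by positivity
  rw [← integral_rpow_mul_exp_neg_mul hs hMa]
  refine setIntegral_mono_on (integrableOn_rpow_mul_exp_neg_mul (by linarith) hMa)
    (integrableOn_laplaceMoment hσ n (max_one_sub_div_two_lt hσ ha)) measurableSet_Ioi
    fun u hu => le_trans ?_ (rpow_mul_exp_le_pow_mul_exp_mul_betaKernel hu n a)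
  have hu : 0 < u := hu
  have : a + max (σ - 1) 0 / 2 ≤ max 1 σ * a := by
    rcases le_total σ 1 with h | h
    · rw [max_eq_right (by linarith), max_eq_left h]; linarith
    · rw [max_eq_left (by linarith), max_eq_right h]; nlinarith
  gcongr

lemma laplaceMoment_pos (hσ : 0 < σ) {a : ℝ} (ha : 1 / 2 ≤ a) (n : ℕ) :
    0 < laplaceMoment σ n a :=
  (le_laplaceMoment hσ ha n).trans_lt'
    (mul_pos (Gamma_pos_of_pos (by positivity)) (rpow_pos_of_pos (by positivity) _))

lemma laplaceMoment_le (hσ : 0 < σ) {a : ℝ} (ha : 1 / 2 ≤ a) (n : ℕ) :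
    laplaceMoment σ n a ≤ Gamma (n + σ) * (min 1 σ * a) ^ (-((n : ℝ) + σ)) := by
  have hs : 0 < (n : ℝ) + σ := by positivity
  have hma : 0 < min 1 σ * a := mul_pos (lt_min one_pos hσ) (by linarith)
  rw [← integral_rpow_mul_exp_neg_mul hs hma]
  refine setIntegral_mono_on (integrableOn_laplaceMoment hσ n (max_one_sub_div_two_lt hσ ha))
    (integrableOn_rpow_mul_exp_neg_mul (by linarith) hma) measurableSet_Ioi
    fun u hu => le_trans (pow_mul_exp_mul_betaKernel_le hu n a) ?_
  have hu : 0 < u := hu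
  have : min 1 σ * a ≤ a - max (1 - σ) 0 / 2 := by
    rcases le_total σ 1 with h | h
    · rw [max_eq_left (by linarith), min_eq_right h]; nlinarith
    · rw [max_eq_right (by linarith), min_eq_left h]; linarith
  gcongr

lemma image_exp_neg_Ioi_zero : (fun u => exp (-u)) '' Ioi 0 = Ioo 0 1 := by
  ext x
  constructor
  · rintro ⟨u, hu, rfl⟩
    exact ⟨exp_pos _, sub_pos.mp (one_sub_exp_neg_pos hu)⟩
  · rintro ⟨hx0, hx1⟩
    exact ⟨-log x, neg_pos.mpr (log_neg hx0 hx1), by simp [exp_log hx0]⟩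

lemma integral_exp_neg_mul_betaKernel (a : ℝ) :
    ∫ u in Ioi 0, exp (-(a * u)) * betaKernel σ u =
      ∫ x in Ioo 0 1, x ^ (a - 1) * (1 - x) ^ (σ - 1) := by
  rw [← image_exp_neg_Ioi_zero, integral_image_eq_integral_abs_deriv_smul measurableSet_Ioi
    (fun u _ => (hasDerivAt_neg u).exp.hasDerivWithinAt)
    (fun u _ v _ h => neg_injective (exp_injective h))]
  refine setIntegral_congr_fun measurableSet_Ioi fun u _ => ?_
  rw [smul_eq_mul, mul_neg_one, abs_neg, abs_of_pos (exp_pos _), betaKernel,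
    rpow_def_of_pos (exp_pos _), log_exp, ← mul_assoc, ← exp_add]
  ring_nf

lemma integral_rpow_mul_one_sub_rpow {a : ℝ} (ha : 0 < a) (hσ : 0 < σ) :
    ∫ x in Ioo 0 1, x ^ (a - 1) * (1 - x) ^ (σ - 1) = beta a σ := by
  have h : Complex.betaIntegral a σ =
      ((∫ x in (0 : ℝ)..1, x ^ (a - 1) * (1 - x) ^ (σ - 1) : ℝ) : ℂ) := by
    rw [Complex.betaIntegral, ← intervalIntegral.integral_ofReal]
    refine intervalIntegral.integral_congr fun x hx => ?_
    rw [uIcc_of_le zero_le_one] at hx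
    rw [Complex.ofReal_mul, Complex.ofReal_cpow hx.1, Complex.ofReal_cpow (by linarith [hx.2])]
    push_cast
    rfl
  rw [beta_eq_betaIntegralReal a σ ha hσ, h, Complex.ofReal_re,
    intervalIntegral.integral_of_le zero_le_one, integral_Ioc_eq_integral_Ioo]

lemma laplaceMoment_zero {a : ℝ} (ha : 0 < a) (hσ : 0 < σ) : laplaceMoment σ 0 a = beta a σ := by
  rw [laplaceMoment, ← integral_rpow_mul_one_sub_rpow ha hσ, ← integral_exp_neg_mul_betaKernel]
  simp only [pow_zero, one_mul]

def betaKernelMeasure (σ : ℝ) : Measure ℝ :=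
  (volume.restrict (Ioi 0)).withDensity fun u => ((betaKernel σ u).toNNReal : ENNReal)

lemma integral_betaKernelMeasure (g : ℝ → ℝ) :
    ∫ u, g u ∂betaKernelMeasure σ = ∫ u in Ioi 0, betaKernel σ u * g u := by
  rw [betaKernelMeasure, integral_withDensity_eq_integral_smul measurable_betaKernel.real_toNNReal]
  refine setIntegral_congr_fun measurableSet_Ioi fun u hu => ?_
  rw [NNReal.smul_def, smul_eq_mul, Real.coe_toNNReal _ (betaKernel_nonneg (le_of_lt hu))]

lemma integrable_betaKernelMeasure_iff {g : ℝ → ℝ} :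
    Integrable g (betaKernelMeasure σ) ↔ IntegrableOn (fun u => betaKernel σ u * g u) (Ioi 0) := by
  rw [betaKernelMeasure,
    integrable_withDensity_iff_integrable_smul measurable_betaKernel.real_toNNReal]
  refine integrableOn_congr_fun (fun u hu => ?_) measurableSet_Ioi
  rw [NNReal.smul_def, smul_eq_mul, Real.coe_toNNReal _ (betaKernel_nonneg (le_of_lt hu))]

lemma Ioi_subset_interior_integrableExpSet (hσ : 0 < σ) :
    Ioi (max (1 - σ) 0) ⊆ interior (integrableExpSet (fun u => -(u / 2)) (betaKernelMeasure σ)) :=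
  isOpen_Ioi.subset_interior_iff.mpr fun τ hτ => by
    rw [integrableExpSet, mem_ofPred_eq, integrable_betaKernelMeasure_iff]
    refine (integrableOn_laplaceMoment hσ 0 (a := τ / 2) (by linarith [hτ.out])).congr_fun
      (fun u _ => ?_) measurableSet_Ioi
    ring_nf

lemma iteratedDeriv_mgf_betaKernelMeasure (hσ : 0 < σ) {τ : ℝ} (hτ : max (1 - σ) 0 < τ) (n : ℕ) :
    iteratedDeriv n (mgf (fun u => -(u / 2)) (betaKernelMeasure σ)) τ =
      (-(1 / 2)) ^ n * laplaceMoment σ n (τ / 2) := by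
  rw [iteratedDeriv_mgf (Ioi_subset_interior_integrableExpSet hσ hτ), integral_betaKernelMeasure,
    laplaceMoment, ← integral_const_mul]
  refine setIntegral_congr_fun measurableSet_Ioi fun u _ => ?_
  rw [show -(u / 2) = -(1 / 2) * u by ring, mul_pow]
  ring_nf

def leibnizSq (f : ℕ → ℝ) (β : ℕ) : ℝ :=
  ∑ i ∈ Finset.range (β + 1), (β.choose i : ℝ) * (f i * f (β - i))

lemma leibnizSq_pos {f : ℕ → ℝ} (hf : ∀ n, 0 < f n) (β : ℕ) : 0 < leibnizSq f β :=
  Finset.sum_pos' (fun i _ => by have := hf i; have := hf (β - i); positivity)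
    ⟨0, Finset.mem_range.mpr β.succ_pos, by
      simp only [Nat.choose_zero_right, Nat.cast_one, one_mul]; exact mul_pos (hf 0) (hf _)⟩

lemma leibnizSq_mono {f g : ℕ → ℝ} (hf : ∀ n, 0 ≤ f n) (hfg : ∀ n, f n ≤ g n) (β : ℕ) :
    leibnizSq f β ≤ leibnizSq g β :=
  Finset.sum_le_sum fun i _ => by
    have := (hf i).trans (hfg i)
    have := hf (β - i)
    gcongr <;> exact hfg _

lemma leibnizSq_mul_rpow (f : ℕ → ℝ) {c : ℝ} (hc : 0 < c) (σ : ℝ) (β : ℕ) :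
    leibnizSq (fun n => f n * c ^ (-((n : ℝ) + σ))) β =
      leibnizSq f β * c ^ (-((β : ℝ) + 2 * σ)) := by
  rw [leibnizSq, leibnizSq, Finset.sum_mul]
  refine Finset.sum_congr rfl fun i hi => ?_
  have hc' : c ^ (-((i : ℝ) + σ)) * c ^ (-(((β - i : ℕ) : ℝ) + σ)) = c ^ (-((β : ℝ) + 2 * σ)) := by
    rw [← rpow_add hc, Nat.cast_sub (Nat.lt_succ_iff.mp (Finset.mem_range.mp hi))]
    ring_nf
  rw [← hc']
  ring

-- Written in `τ = 2a`, so that `ξ` is a translate of `C • gammaRatioSq σ`, with no rescaling.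
def gammaRatioSq (σ τ : ℝ) : ℝ := (Gamma (τ / 2) / Gamma (τ / 2 + σ)) ^ 2

lemma gammaRatio_eq_mgf (hσ : 0 < σ) {τ : ℝ} (hτ : max (1 - σ) 0 < τ) :
    Gamma (τ / 2) / Gamma (τ / 2 + σ) =
      mgf (fun u => -(u / 2)) (betaKernelMeasure σ) τ / Gamma σ := by
  have h := iteratedDeriv_mgf_betaKernelMeasure hσ hτ 0
  rw [iteratedDeriv_zero, pow_zero, one_mul,
    laplaceMoment_zero (by linarith [le_max_right (1 - σ) 0]) hσ, beta] at h
  rw [h, div_right_comm, mul_div_cancel_right₀ _ (Gamma_pos_of_pos hσ).ne']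

lemma neg_one_pow_mul_iteratedDeriv_gammaRatioSq (hσ : 0 < σ) {τ : ℝ} (hτ : max (1 - σ) 0 < τ)
    (β : ℕ) :
    (-1) ^ β * iteratedDeriv β (gammaRatioSq σ) τ =
      (Gamma σ ^ 2)⁻¹ * (1 / 2) ^ β * leibnizSq (fun n => laplaceMoment σ n (τ / 2)) β := by
  set m := mgf (fun u => -(u / 2)) (betaKernelMeasure σ)
  have hm : ContDiffAt ℝ β m τ :=
    (analyticAt_mgf (Ioi_subset_interior_integrableExpSet hσ hτ)).contDiffAt
  have heq : gammaRatioSq σ =ᶠ[𝓝 τ] fun τ => (Gamma σ ^ 2)⁻¹ * (m τ * m τ) := by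
    filter_upwards [isOpen_Ioi.mem_nhds hτ] with τ' hτ'
    rw [gammaRatioSq, gammaRatio_eq_mgf hσ hτ']
    ring
  rw [heq.iteratedDeriv_eq, iteratedDeriv_const_mul_field, iteratedDeriv_fun_mul hm hm, leibnizSq,
    Finset.mul_sum, Finset.mul_sum, Finset.mul_sum]
  refine Finset.sum_congr rfl fun i hi => ?_
  rw [iteratedDeriv_mgf_betaKernelMeasure hσ hτ, iteratedDeriv_mgf_betaKernelMeasure hσ hτ]
  have hsign : (-1 : ℝ) ^ β * ((-(1 / 2)) ^ i * (-(1 / 2)) ^ (β - i)) = (1 / 2) ^ β := by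
    rw [← pow_add, Nat.add_sub_cancel' (Nat.lt_succ_iff.mp (Finset.mem_range.mp hi)), ← mul_pow]
    norm_num
  linear_combination (Gamma σ ^ 2)⁻¹ * (β.choose i : ℝ) * laplaceMoment σ i (τ / 2) *
    laplaceMoment σ (β - i) (τ / 2) * hsign

lemma le_leibnizSq_laplaceMoment (hσ : 0 < σ) {τ : ℝ} (hτ : 1 ≤ τ) (β : ℕ) :
    leibnizSq (fun n => Gamma (n + σ)) β * (max 1 σ / 2) ^ (-((β : ℝ) + 2 * σ)) *
        τ ^ (-((β : ℝ) + 2 * σ)) ≤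
      leibnizSq (fun n => laplaceMoment σ n (τ / 2)) β := by
  have h := leibnizSq_mono (f := fun n => Gamma (n + σ) * (max 1 σ * (τ / 2)) ^ (-((n : ℝ) + σ)))
    (fun n => by positivity) (fun n => le_laplaceMoment hσ (by linarith) n) β
  rwa [leibnizSq_mul_rpow _ (by positivity), show max 1 σ * (τ / 2) = max 1 σ / 2 * τ by ring,
    mul_rpow (by positivity) (by linarith), ← mul_assoc] at h

lemma leibnizSq_laplaceMoment_le (hσ : 0 < σ) {τ : ℝ} (hτ : 1 ≤ τ) (β : ℕ) :
    leibnizSq (fun n => laplaceMoment σ n (τ / 2)) β ≤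
      leibnizSq (fun n => Gamma (n + σ)) β * (min 1 σ / 2) ^ (-((β : ℝ) + 2 * σ)) *
        τ ^ (-((β : ℝ) + 2 * σ)) := by
  have hm : 0 < min 1 σ := lt_min one_pos hσ
  have h := leibnizSq_mono (g := fun n => Gamma (n + σ) * (min 1 σ * (τ / 2)) ^ (-((n : ℝ) + σ)))
    (fun n => (laplaceMoment_pos hσ (by linarith) n).le)
    (fun n => laplaceMoment_le hσ (by linarith) n) β
  rwa [leibnizSq_mul_rpow _ (by positivity), show min 1 σ * (τ / 2) = min 1 σ / 2 * τ by ring,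
    mul_rpow (by positivity) (by linarith), ← mul_assoc] at h

theorem exists_bounds_iteratedDeriv_gammaRatioSq (hσ : 0 < σ) (β : ℕ) :
    ∃ c₁ c₂ : ℝ, 0 < c₁ ∧ 0 < c₂ ∧ ∀ τ : ℝ, 1 ≤ τ →
      c₁ * τ ^ (-((β : ℝ) + 2 * σ)) ≤ (-1) ^ β * iteratedDeriv β (gammaRatioSq σ) τ ∧
        (-1) ^ β * iteratedDeriv β (gammaRatioSq σ) τ ≤ c₂ * τ ^ (-((β : ℝ) + 2 * σ)) := by
  have hK : 0 < leibnizSq (fun n => Gamma (n + σ)) β :=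
    leibnizSq_pos (fun n => Gamma_pos_of_pos (by positivity)) β
  have hm : 0 < min 1 σ := lt_min one_pos hσ
  set c := (Gamma σ ^ 2)⁻¹ * (1 / 2) ^ β
  have hc : 0 < c := by positivity
  refine ⟨c * (leibnizSq (fun n => Gamma (n + σ)) β * (max 1 σ / 2) ^ (-((β : ℝ) + 2 * σ))),
    c * (leibnizSq (fun n => Gamma (n + σ)) β * (min 1 σ / 2) ^ (-((β : ℝ) + 2 * σ))),
    by positivity, by positivity, fun τ hτ => ?_⟩
  rw [neg_one_pow_mul_iteratedDeriv_gammaRatioSq hσ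
    (by linarith [max_one_sub_div_two_lt hσ (by linarith : (1 : ℝ) / 2 ≤ τ / 2)])]
  constructor
  · rw [mul_assoc c]
    exact mul_le_mul_of_nonneg_left (le_leibnizSq_laplaceMoment hσ hτ β) hc.le
  · rw [mul_assoc c]
    exact mul_le_mul_of_nonneg_left (leibnizSq_laplaceMoment_le hσ hτ β) hc.le

lemma rpow_neg_le_mul_rpow_neg {x y c e : ℝ} (hy : 0 < y) (hc : 0 < c) (he : 0 ≤ e)
    (h : y ≤ c * x) : x ^ (-e) ≤ c ^ e * y ^ (-e) :=
  calc x ^ (-e) ≤ (y / c) ^ (-e) :=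
        rpow_le_rpow_of_nonpos (by positivity) ((div_le_iff₀' hc).mpr h) (neg_nonpos.mpr he)
    _ = c ^ e * y ^ (-e) := by
        rw [div_rpow hy.le hc.le, rpow_neg hc.le, div_inv_eq_mul, mul_comm]

end GammaRatio

end

open GammaRatio in
/-- the function `ξ(t) = C·(Γ((t-k)/2)/Γ((t+d+k+1)/2))²` satisfies, for every
`β ∈ ℕ`, the two-sided estimate `(-1)^β ξ^{(β)}(t) ≍ t^{-(d+2k+1)-β}` on `[k+1, ∞)`;
in particular (`β = 0`) `ξ(t) ≍ t^{-(d+2k+1)}` and the derivatives of `ξ` alternate in sign. -/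
theorem xi_derivative_asymptotics (d k : ℕ) (C : ℝ) (hC : 0 < C) :
    ∀ β : ℕ, ∃ c₁ c₂ : ℝ, 0 < c₁ ∧ 0 < c₂ ∧
      ∀ t : ℝ, (k : ℝ) + 1 ≤ t →
        c₁ * t ^ (-((d : ℝ) + 2 * k + 1) - β) ≤
          (-1 : ℝ) ^ β *
            iteratedDeriv β
              (fun s : ℝ =>
                C * (Real.Gamma ((s - k) / 2) / Real.Gamma ((s + d + k + 1) / 2)) ^ 2) t ∧
        (-1 : ℝ) ^ β *
            iteratedDeriv β
              (fun s : ℝ =>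
                C * (Real.Gamma ((s - k) / 2) / Real.Gamma ((s + d + k + 1) / 2)) ^ 2) t ≤
          c₂ * t ^ (-((d : ℝ) + 2 * k + 1) - β) := by
  intro β
  set σ : ℝ := ((d : ℝ) + 2 * k + 1) / 2
  obtain ⟨c₁, c₂, hc₁, hc₂, hbounds⟩ := exists_bounds_iteratedDeriv_gammaRatioSq (σ := σ)
    (by positivity) β
  have hshift : (fun s : ℝ => C * (Gamma ((s - k) / 2) / Gamma ((s + d + k + 1) / 2)) ^ 2) =
      fun s => C * gammaRatioSq σ (s - k) := by
    funext s
    rw [gammaRatioSq, show (s + d + k + 1) / 2 = (s - k) / 2 + σ by ring]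
  have hexp : -((d : ℝ) + 2 * k + 1) - β = -((β : ℝ) + 2 * σ) := by ring
  refine ⟨C * c₁, C * c₂ * ((k : ℝ) + 1) ^ ((β : ℝ) + 2 * σ), by positivity, by positivity,
    fun t ht => ?_⟩
  rw [hshift, iteratedDeriv_const_mul_field, iteratedDeriv_comp_sub_const β (gammaRatioSq σ), hexp,
    mul_left_comm]
  obtain ⟨hlow, hupp⟩ := hbounds (t - k) (by linarith)
  have hτ : 0 < t - k := by linarith
  constructor
  · calc C * c₁ * t ^ (-((β : ℝ) + 2 * σ)) ≤ C * (c₁ * (t - k) ^ (-((β : ℝ) + 2 * σ))) := by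
          rw [mul_assoc]
          gcongr C * (c₁ * ?_)
          exact rpow_le_rpow_of_nonpos hτ (by linarith [k.cast_nonneg (α := ℝ)])
            (neg_nonpos.mpr (by positivity))
      _ ≤ _ := by gcongr
  · calc _ ≤ C * (c₂ * (t - k) ^ (-((β : ℝ) + 2 * σ))) := by gcongr
      _ ≤ C * (c₂ * (((k : ℝ) + 1) ^ ((β : ℝ) + 2 * σ) * t ^ (-((β : ℝ) + 2 * σ)))) := by
          gcongr
          exact rpow_neg_le_mul_rpow_neg (by linarith) (by positivity) (by positivity)
            (by nlinarith)
      _ = _ := by ring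
end

section
/- Let M be an n×n symmetric positive semidefinite matrix whose eigenvalues satisfy c₋ n j^{-α} ≤ λ_j(M) ≤ c₊ n j^{-α} for j = 1,...,n, with α > 1. Then for all λ in the range c₁ n^{1-α} ≤ λ ≤ c₂ n, the effective dimension d_eff(λ) := tr(M(M+λI)^{-1}) = Σ_{j=1}^n λ_j/(λ_j + λ) satisfies d_eff(λ) ≍ (n/λ)^{1/α}, with implied constants depending only on α, c₋, c₊, c₁, c₂. -/
/-!
Since `λⱼ/(λⱼ+λ)` lies between `½ min(1, λⱼ/λ)` and `min(1, λⱼ/λ)`, the eigenvalue bounds squeeze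
`d_eff(λ)` between multiples of the clipped sum `Σ_{j<n} min(1, K (j+1)^{-α})` with `K ≍ n/λ`.
The terms with `(j+1)^α ≤ K` equal `1`, so the clipped sum is at least `min(n, ⌊K^{1/α}⌋)` and at
least its first term `min(1, K)`; on the admissible range of `λ` (`K ≳ 1`, `K^{1/α} ≲ n`) this is
`≳ K^{1/α}`. Conversely it is at most the number `J ≈ K^{1/α}` of those terms plus the tail
`K Σ_{j ≥ J} (j+1)^{-α} ≤ K J^{1-α}/(α-1) ≤ J/(α-1)`, bounded by comparison with `∫ x^{-α}`.
-/

open Finset Real Matrix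

namespace Matrix.IsHermitian

variable {ι : Type*} [Fintype ι] [DecidableEq ι] {A : Matrix ι ι ℝ}

theorem trace_mul_inv_add_smul_one (hA : A.IsHermitian) {lam : ℝ}
    (h : ∀ i, hA.eigenvalues i + lam ≠ 0) :
    (A * (A + lam • (1 : Matrix ι ι ℝ))⁻¹).trace =
      ∑ i, hA.eigenvalues i / (hA.eigenvalues i + lam) := by
  set d := hA.eigenvalues
  set Φ := Unitary.conjStarAlgAut ℝ (Matrix ι ι ℝ) hA.eigenvectorUnitary
  have hA' : A = Φ (diagonal d) := by simpa [Φ] using hA.spectral_theorem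
  have hshift : A + lam • (1 : Matrix ι ι ℝ) = Φ (diagonal fun i ↦ d i + lam) := by
    rw [hA', ← map_one Φ, ← map_smul, ← map_add, smul_one_eq_diagonal, diagonal_add]
  have hinv : (A + lam • (1 : Matrix ι ι ℝ))⁻¹ = Φ (diagonal fun i ↦ (d i + lam)⁻¹) := by
    refine inv_eq_right_inv ?_
    rw [hshift, ← map_mul, diagonal_mul_diagonal]
    simp [mul_inv_cancel₀ (h _)]
  rw [hinv, hA', ← map_mul, diagonal_mul_diagonal, Unitary.conjStarAlgAut_apply, trace_mul_cycle,
    Unitary.coe_star_mul_self, one_mul, trace_diagonal]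
  simp only [div_eq_mul_inv]

end Matrix.IsHermitian

theorem sum_Ico_rpow_neg_le {α : ℝ} (hα : 1 < α) {J : ℕ} (hJ : 1 ≤ J) (n : ℕ) :
    ∑ j ∈ Ico J n, ((j : ℝ) + 1) ^ (-α) ≤ (J : ℝ) ^ (1 - α) / (α - 1) := by
  rcases le_or_gt n J with hnJ | hJn
  · rw [Ico_eq_empty (by omega), sum_empty]
    positivity
  have hJpos : (0 : ℝ) < J := by exact_mod_cast hJ
  have hanti : AntitoneOn (fun x : ℝ ↦ x ^ (-α)) (Set.Icc (J : ℝ) n) := fun x hx y _ hxy ↦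
    rpow_le_rpow_of_nonpos (hJpos.trans_le hx.1) hxy (by linarith)
  have hzero : (0 : ℝ) ∉ Set.uIcc (J : ℝ) n := by
    rw [Set.uIcc_of_le (by exact_mod_cast hJn.le)]
    exact fun h ↦ hJpos.not_ge h.1
  calc ∑ j ∈ Ico J n, ((j : ℝ) + 1) ^ (-α)
      ≤ ∫ x in (J : ℝ)..n, x ^ (-α) := by
        simpa using hanti.sum_le_integral_Ico hJn.le
    _ = ((J : ℝ) ^ (1 - α) - (n : ℝ) ^ (1 - α)) / (α - 1) := by
        rw [integral_rpow (Or.inr ⟨by linarith, hzero⟩)]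
        rw [show -α + 1 = 1 - α by ring, ← neg_sub α 1, div_neg, ← neg_div, neg_sub]
    _ ≤ (J : ℝ) ^ (1 - α) / (α - 1) := by
        gcongr
        exact sub_le_self _ (by positivity)

noncomputable def clippedPowerSum (α K : ℝ) (n : ℕ) : ℝ :=
  ∑ j ∈ range n, min 1 (K * ((j : ℝ) + 1) ^ (-α))

section

variable {α K : ℝ} {n : ℕ}

theorem clippedPowerSum_le (hα : 1 < α) (hK : 0 ≤ K) :
    clippedPowerSum α K n ≤ α / (α - 1) * (K ^ (1 / α) + 1) := by
  have hα₀ : 0 < α := by linarith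
  have hα₁ : 0 < α - 1 := by linarith
  set J := ⌊K ^ (1 / α)⌋₊ + 1
  have hJ : K ^ (1 / α) ≤ J := by
    simpa [J] using (Nat.lt_floor_add_one (K ^ (1 / α))).le
  have hJpos : (0 : ℝ) < J := by positivity
  have hKJ : K ≤ (J : ℝ) ^ α := by
    rwa [one_div, rpow_inv_le_iff_of_pos hK hJpos.le hα₀] at hJ
  have head : ∑ j ∈ range J, min 1 (K * ((j : ℝ) + 1) ^ (-α)) ≤ J := by
    simpa using sum_le_sum fun j (_ : j ∈ range J) ↦ min_le_left 1 (K * ((j : ℝ) + 1) ^ (-α))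
  have tail : ∑ j ∈ Ico J (max n J), min 1 (K * ((j : ℝ) + 1) ^ (-α)) ≤ J / (α - 1) :=
    calc ∑ j ∈ Ico J (max n J), min 1 (K * ((j : ℝ) + 1) ^ (-α))
        ≤ K * ∑ j ∈ Ico J (max n J), ((j : ℝ) + 1) ^ (-α) := by
          rw [mul_sum]
          exact sum_le_sum fun _ _ ↦ min_le_right _ _
      _ ≤ K * ((J : ℝ) ^ (1 - α) / (α - 1)) := by
          gcongr
          exact sum_Ico_rpow_neg_le hα (by omega) _
      _ = K * (J : ℝ) ^ (-α) * J / (α - 1) := by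
          rw [sub_eq_add_neg, rpow_add hJpos, rpow_one]
          ring
      _ ≤ J / (α - 1) := by
          refine div_le_div_of_nonneg_right (mul_le_of_le_one_left hJpos.le ?_) hα₁.le
          rw [rpow_neg hJpos.le, ← div_eq_mul_inv]
          exact div_le_one_of_le₀ hKJ (by positivity)
  calc clippedPowerSum α K n
      ≤ ∑ j ∈ range (max n J), min 1 (K * ((j : ℝ) + 1) ^ (-α)) :=
        sum_le_sum_of_subset_of_nonneg (range_subset_range.mpr (le_max_left n J))
          fun _ _ _ ↦ le_min zero_le_one (by positivity)
    _ ≤ J + J / (α - 1) := by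
        rw [← sum_range_add_sum_Ico _ (le_max_right n J)]
        exact add_le_add head tail
    _ = α / (α - 1) * J := by
        field_simp
        ring
    _ ≤ α / (α - 1) * (K ^ (1 / α) + 1) := by
        refine mul_le_mul_of_nonneg_left ?_ (by positivity)
        simpa [J] using Nat.floor_le (by positivity : 0 ≤ K ^ (1 / α))

theorem min_floor_le_clippedPowerSum (hα : 0 < α) (hK : 0 ≤ K) :
    min (n : ℝ) ⌊K ^ (1 / α)⌋₊ ≤ clippedPowerSum α K n := by
  have hone : ∀ j < ⌊K ^ (1 / α)⌋₊, min 1 (K * ((j : ℝ) + 1) ^ (-α)) = 1 := by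
    intro j hj
    have hjK : (j : ℝ) + 1 ≤ K ^ (1 / α) := by
      have := Nat.le_floor_iff (by positivity) |>.mp (Nat.succ_le_of_lt hj)
      exact_mod_cast this
    have hjα : ((j : ℝ) + 1) ^ α ≤ K := by
      rwa [one_div, le_rpow_inv_iff_of_pos (by positivity) hK hα] at hjK
    refine min_eq_left ?_
    rw [rpow_neg (by positivity), ← div_eq_mul_inv]
    exact (one_le_div₀ (by positivity)).mpr hjα
  calc min (n : ℝ) ⌊K ^ (1 / α)⌋₊
      = ∑ j ∈ range (min n ⌊K ^ (1 / α)⌋₊), min 1 (K * ((j : ℝ) + 1) ^ (-α)) := by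
        rw [sum_congr rfl fun j hj ↦ hone j (lt_of_lt_of_le (mem_range.mp hj) (min_le_right _ _))]
        simp
    _ ≤ clippedPowerSum α K n :=
        sum_le_sum_of_subset_of_nonneg (range_subset_range.mpr (min_le_left _ _))
          fun _ _ _ ↦ le_min zero_le_one (by positivity)

theorem min_one_le_clippedPowerSum (hn : 0 < n) (hK : 0 ≤ K) :
    min 1 K ≤ clippedPowerSum α K n := by
  simpa [clippedPowerSum] using single_le_sum (f := fun j : ℕ ↦ min 1 (K * ((j : ℝ) + 1) ^ (-α)))
    (fun _ _ ↦ le_min zero_le_one (by positivity)) (mem_range.mpr hn)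

theorem le_clippedPowerSum (hα : 0 < α) (hn : 0 < n) (hK : 0 ≤ K) :
    min 1 K * min (n : ℝ) (K ^ (1 / α)) / 2 ≤ clippedPowerSum α K n := by
  rcases le_or_gt 1 K with hK₁ | hK₁
  · have hs : 1 ≤ K ^ (1 / α) := one_le_rpow hK₁ (by positivity)
    calc min 1 K * min (n : ℝ) (K ^ (1 / α)) / 2
        ≤ min (n : ℝ) ⌊K ^ (1 / α)⌋₊ := by
          rw [min_eq_left hK₁, one_mul]
          refine le_min ?_ ?_
          · linarith [min_le_left (n : ℝ) (K ^ (1 / α)), (Nat.cast_nonneg n : (0 : ℝ) ≤ n)]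
          · linarith [min_le_right (n : ℝ) (K ^ (1 / α)), Nat.div_two_lt_floor hs]
      _ ≤ clippedPowerSum α K n := min_floor_le_clippedPowerSum hα hK
  · have hs : K ^ (1 / α) ≤ 1 := rpow_le_one hK hK₁.le (by positivity)
    calc min 1 K * min (n : ℝ) (K ^ (1 / α)) / 2
        ≤ K * 1 / 2 := by
          gcongr
          · exact min_le_right _ _
          · exact (min_le_right _ _).trans hs
      _ ≤ min 1 K := by rw [min_eq_right hK₁.le]; linarith
      _ ≤ clippedPowerSum α K n := min_one_le_clippedPowerSum hn hK

end

noncomputable def effectiveDimension {ι : Type*} [Fintype ι] (d : ι → ℝ) (lam : ℝ) : ℝ :=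
  ∑ i, d i / (d i + lam)

section

variable {x lam : ℝ}

theorem div_add_le_min_one_div (hx : 0 ≤ x) (hlam : 0 < lam) :
    x / (x + lam) ≤ min 1 (x / lam) :=
  le_min ((div_le_one (by linarith)).mpr (by linarith))
    (div_le_div_of_nonneg_left hx hlam (by linarith))

theorem min_one_div_le_two_mul_div_add (hx : 0 ≤ x) (hlam : 0 < lam) :
    min 1 (x / lam) ≤ 2 * (x / (x + lam)) := by
  rw [mul_div_assoc']
  rcases le_total x lam with hxl | hlx
  · refine (min_le_right _ _).trans ?_
    rw [div_le_div_iff₀ hlam (by linarith)]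
    nlinarith
  · refine (min_le_left _ _).trans ?_
    rw [one_le_div (by linarith)]
    linarith

end

section

variable {α c lam : ℝ} {n : ℕ} {d : Fin n → ℝ}

theorem effectiveDimension_le_clippedPowerSum (hlam : 0 < lam) (hd₀ : ∀ j, 0 ≤ d j)
    (hd : ∀ j : Fin n, d j ≤ c * ((j : ℝ) + 1) ^ (-α)) :
    effectiveDimension d lam ≤ clippedPowerSum α (c / lam) n := by
  rw [clippedPowerSum, ← Fin.sum_univ_eq_sum_range fun j ↦ min 1 (c / lam * ((j : ℝ) + 1) ^ (-α))]
  refine sum_le_sum fun j _ ↦ (div_add_le_min_one_div (hd₀ j) hlam).trans (min_le_min_left 1 ?_)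
  rw [div_mul_eq_mul_div]
  exact div_le_div_of_nonneg_right (hd j) hlam.le

theorem clippedPowerSum_le_two_mul_effectiveDimension (hlam : 0 < lam) (hd₀ : ∀ j, 0 ≤ d j)
    (hd : ∀ j : Fin n, c * ((j : ℝ) + 1) ^ (-α) ≤ d j) :
    clippedPowerSum α (c / lam) n ≤ 2 * effectiveDimension d lam := by
  rw [clippedPowerSum, ← Fin.sum_univ_eq_sum_range fun j ↦ min 1 (c / lam * ((j : ℝ) + 1) ^ (-α)),
    effectiveDimension, mul_sum]
  refine sum_le_sum fun j _ ↦
    (min_le_min_left 1 ?_).trans (min_one_div_le_two_mul_div_add (hd₀ j) hlam)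
  rw [div_mul_eq_mul_div]
  exact div_le_div_of_nonneg_right (hd j) hlam.le

end

theorem mul_rpow_add_one_le {p c c' x : ℝ} (hp : 0 ≤ p) (hc : 0 ≤ c) (hc' : 0 ≤ c') (hx : 0 ≤ x)
    (h : 1 ≤ c' * x) : (c * x) ^ p + 1 ≤ (c ^ p + c' ^ p) * x ^ p := by
  have := one_le_rpow h hp
  rw [mul_rpow hc' hx] at this
  rw [mul_rpow hc hx]
  linarith

section

variable {α c c₁ c₂ lam : ℝ} {n : ℕ} {d : Fin n → ℝ}

theorem effectiveDimension_le_of_le_rpow (hα : 1 < α) (hc : 0 ≤ c) (hc₂ : 0 < c₂)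
    (hlam : 0 < lam) (hlam₂ : lam ≤ c₂ * n) (hd₀ : ∀ j, 0 ≤ d j)
    (hd : ∀ j : Fin n, d j ≤ c * n * ((j : ℝ) + 1) ^ (-α)) :
    effectiveDimension d lam ≤ α / (α - 1) * (c ^ (1 / α) + c₂ ^ (1 / α)) * (n / lam) ^ (1 / α) := by
  have hα₁ : 0 < α - 1 := by linarith
  have hx : 1 ≤ c₂ * (n / lam) := by rwa [mul_div_assoc', one_le_div hlam]
  calc effectiveDimension d lam
      ≤ clippedPowerSum α (c * n / lam) n := effectiveDimension_le_clippedPowerSum hlam hd₀ hd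
    _ ≤ α / (α - 1) * ((c * n / lam) ^ (1 / α) + 1) := clippedPowerSum_le hα (by positivity)
    _ ≤ α / (α - 1) * (c ^ (1 / α) + c₂ ^ (1 / α)) * (n / lam) ^ (1 / α) := by
        rw [mul_assoc, mul_div_assoc]
        gcongr
        exact mul_rpow_add_one_le (by positivity) hc hc₂.le (by positivity) hx

theorem le_effectiveDimension_of_rpow_le (hα : 0 < α) (hc : 0 < c) (hc₁ : 0 < c₁) (hc₂ : 0 < c₂)
    (hn : 0 < n) (hlam₁ : c₁ * (n : ℝ) ^ (1 - α) ≤ lam) (hlam₂ : lam ≤ c₂ * n)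
    (hd : ∀ j : Fin n, c * n * ((j : ℝ) + 1) ^ (-α) ≤ d j) :
    min 1 (c / c₂) * min (c₁ ^ (1 / α)) (c ^ (1 / α)) / 4 * (n / lam) ^ (1 / α) ≤
      effectiveDimension d lam := by
  have hlam : 0 < lam := (by positivity : 0 < c₁ * (n : ℝ) ^ (1 - α)).trans_le hlam₁
  have hd₀ : ∀ j, 0 ≤ d j := fun j ↦ (by positivity : 0 ≤ c * n * ((j : ℝ) + 1) ^ (-α)).trans (hd j)
  have hmin₁ : min 1 (c / c₂) ≤ min 1 (c * n / lam) := by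
    refine min_le_min_left 1 ?_
    rw [div_le_iff₀ hc₂, mul_div_assoc, mul_assoc]
    refine le_mul_of_one_le_right hc.le ?_
    rwa [mul_comm, mul_div_assoc', one_le_div hlam]
  have hn₁ : (c₁ * (n / lam)) ^ (1 / α) ≤ n := by
    rw [one_div, rpow_inv_le_iff_of_pos (by positivity) (by positivity) hα, mul_div_assoc',
      div_le_iff₀ hlam]
    calc c₁ * n = c₁ * (n : ℝ) ^ (1 - α) * (n : ℝ) ^ α := by
          rw [mul_assoc, ← rpow_add (by positivity), sub_add_cancel, rpow_one]
      _ ≤ lam * (n : ℝ) ^ α := by gcongr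
      _ = (n : ℝ) ^ α * lam := mul_comm _ _
  have hmin₂ : min (c₁ ^ (1 / α)) (c ^ (1 / α)) * ((n : ℝ) / lam) ^ (1 / α) ≤
      min (n : ℝ) ((c * n / lam) ^ (1 / α)) := by
    rw [min_mul_of_nonneg _ _ (by positivity), ← mul_rpow hc₁.le (by positivity),
      ← mul_rpow hc.le (by positivity), mul_div_assoc]
    exact min_le_min_right _ hn₁
  calc min 1 (c / c₂) * min (c₁ ^ (1 / α)) (c ^ (1 / α)) / 4 * (n / lam) ^ (1 / α)
      = min 1 (c / c₂) * (min (c₁ ^ (1 / α)) (c ^ (1 / α)) * (n / lam) ^ (1 / α)) / 2 / 2 := by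
        ring
    _ ≤ min 1 (c * n / lam) * min (n : ℝ) ((c * n / lam) ^ (1 / α)) / 2 / 2 := by gcongr
    _ ≤ clippedPowerSum α (c * n / lam) n / 2 := by
        gcongr
        exact le_clippedPowerSum hα hn (by positivity)
    _ ≤ effectiveDimension d lam := by
        linarith [clippedPowerSum_le_two_mul_effectiveDimension hlam hd₀ hd]

end

/-- for a PSD matrix with eigenvalues `λ_j ≍ n j^{-α}` (`α > 1`), the
effective dimension `d_eff(λ) = tr(M(M+λI)⁻¹) = Σ_j λ_j/(λ_j+λ)` satisfies
`d_eff(λ) ≍ (n/λ)^{1/α}` for all regularization parameters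
`c₁ n^{1-α} ≤ λ ≤ c₂ n`, with constants depending only on `α, c₋, c₊, c₁, c₂`. -/
theorem effective_dimension_asymptotics (α cminus cplus c₁ c₂ : ℝ)
    (hα : 1 < α) (hcm : 0 < cminus) (hcp : 0 < cplus) (hc₁ : 0 < c₁) (hc₂ : 0 < c₂) :
    ∃ C₁ C₂ : ℝ, 0 < C₁ ∧ 0 < C₂ ∧
      ∀ (n : ℕ), 0 < n →
        ∀ (M : Matrix (Fin n) (Fin n) ℝ) (hM : M.PosSemidef),
          (∀ j : Fin n,
            cminus * n * ((j : ℝ) + 1) ^ (-α) ≤ hM.1.eigenvalues j ∧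
            hM.1.eigenvalues j ≤ cplus * n * ((j : ℝ) + 1) ^ (-α)) →
          ∀ lam : ℝ, c₁ * (n : ℝ) ^ (1 - α) ≤ lam → lam ≤ c₂ * n →
            (M * (M + lam • (1 : Matrix (Fin n) (Fin n) ℝ))⁻¹).trace =
              ∑ j : Fin n, hM.1.eigenvalues j / (hM.1.eigenvalues j + lam) ∧
            C₁ * ((n : ℝ) / lam) ^ (1 / α) ≤
              ∑ j : Fin n, hM.1.eigenvalues j / (hM.1.eigenvalues j + lam) ∧
            (∑ j : Fin n, hM.1.eigenvalues j / (hM.1.eigenvalues j + lam)) ≤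
              C₂ * ((n : ℝ) / lam) ^ (1 / α) := by
  have hα₁ : 0 < α - 1 := by linarith
  refine ⟨min 1 (cminus / c₂) * min (c₁ ^ (1 / α)) (cminus ^ (1 / α)) / 4,
    α / (α - 1) * (cplus ^ (1 / α) + c₂ ^ (1 / α)), by positivity, by positivity, ?_⟩
  intro n hn M hM hev lam hlam₁ hlam₂
  have hlam : 0 < lam := (by positivity : 0 < c₁ * (n : ℝ) ^ (1 - α)).trans_le hlam₁
  have hd₀ : ∀ j, 0 ≤ hM.1.eigenvalues j := hM.eigenvalues_nonneg
  exact ⟨hM.1.trace_mul_inv_add_smul_one fun j ↦ by linarith [hd₀ j],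
    le_effectiveDimension_of_rpow_le (by linarith) hcm hc₁ hc₂ hn hlam₁ hlam₂ fun j ↦ (hev j).1,
    effectiveDimension_le_of_le_rpow hα hcp.le hc₂ hlam hlam₂ hd₀ fun j ↦ (hev j).2⟩
end
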